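/- Desnanot–Jacobi (Dodgson condensation) identity: let n ≥ 2 and let A be an n×n matrix over a commutative ring. Let A_int be the (n−2)×(n−2) matrix obtained from A by deleting the first and last rows and the first and last columns (with det A_int = 1 when n = 2). Let A^{r,c} denote the (n−1)×(n−1) matrix obtained by deleting row r and column c of A. Then det A · det A_int = det A^{1,1} · det A^{n,n} − det A^{1,n} · det A^{n,1}. -/

import Mathlib

/-!
Jacobi's complementary-minor argument. Let `C` be the identity matrix with columns `a` and `b`
replaced by the corresponding columns of `adj A`. Then `A * C` is `A` with columns `a`, `b`
replaced by `det A • e_a`, `det A • e_b`, whose determinant is `(det A)²` times the minor of `A`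
complementary to `{a, b}`, while `det C` is the `2 × 2` minor of `adj A` on rows and columns
`{a, b}`. Cancelling one factor `det A` is legitimate for the generic matrix over
`ℤ[X_ij]`, and specialisation transfers the identity to every commutative ring. For `a = 1`,
`b = n` the adjugate entries are the four corner minors, up to signs that cancel.
-/

namespace Matrix

theorem updateCol_updateCol_comm {m n α : Type*} [DecidableEq n] (M : Matrix m n α)
    {a b : n} (hab : a ≠ b) (x y : m → α) :
    (M.updateCol a x).updateCol b y = (M.updateCol b y).updateCol a x := by
  ext i j
  by_cases hja : j = a <;> by_cases hjb : j = b <;> simp_all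

variable {n R : Type*} [Fintype n] [DecidableEq n] [CommRing R]

theorem det_one_updateCol_updateCol {a b : n} (hab : a ≠ b) (u v : n → R) :
    (((1 : Matrix n n R).updateCol a u).updateCol b v).det = u a * v b - u b * v a := by
  set C := ((1 : Matrix n n R).updateCol a u).updateCol b v
  -- `C` is block triangular for `{a, b}` and its complement, with identity complementary block
  let p : n → Prop := fun i => i = a ∨ i = b
  have hC : ∀ i, p i → ∀ j, ¬p j → C i j = 0 := by
    rintro i hi j hj
    simp only [p, not_or] at hj
    have hij : i ≠ j := by rintro rfl; tauto
    simp [C, updateCol_ne hj.1, updateCol_ne hj.2, one_apply_ne hij]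
  have hcompl : toSquareBlockProp C (fun i => ¬p i) = 1 := by
    ext ⟨i, hi⟩ ⟨j, hj⟩
    simp only [p, not_or] at hj
    simp [toSquareBlockProp, toBlock, C, updateCol_ne hj.1, updateCol_ne hj.2, one_apply]
  let e : Fin 2 ≃ {i // p i} := Equiv.ofBijective ![⟨a, .inl rfl⟩, ⟨b, .inr rfl⟩] (by
    refine ⟨fun k l hkl => ?_, fun ⟨i, hi⟩ => ?_⟩
    · fin_cases k <;> fin_cases l <;> simp_all [Subtype.ext_iff, hab.symm]
    · rcases hi with rfl | rfl
      exacts [⟨0, rfl⟩, ⟨1, rfl⟩])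
  rw [twoBlockTriangular_det' C p hC, hcompl, det_one, mul_one,
    ← det_submatrix_equiv_self e, det_fin_two]
  have he0 : (e 0 : n) = a := rfl
  have he1 : (e 1 : n) = b := rfl
  simp [toSquareBlockProp, toBlock, C, he0, he1, hab]
  ring

theorem mulVec_adjugate_col (A : Matrix n n R) (j : n) :
    A *ᵥ (fun i => adjugate A i j) = Pi.single j A.det := by
  ext i
  simp [mulVec, dotProduct, ← mul_apply, mul_adjugate, Pi.single_apply, one_apply, eq_comm]

theorem det_mul_adjugate_minor (A : Matrix n n R) {a b : n} (hab : a ≠ b) :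
    A.det * (adjugate A a a * adjugate A b b - adjugate A b a * adjugate A a b) =
      A.det ^ 2 * ((A.updateCol a (Pi.single a 1)).updateCol b (Pi.single b 1)).det := by
  have hsingle : ∀ j, (Pi.single j A.det : n → R) = A.det • Pi.single j 1 := fun j => by
    rw [← Pi.single_smul', smul_eq_mul, mul_one]
  calc A.det * (adjugate A a a * adjugate A b b - adjugate A b a * adjugate A a b)
      = A.det * (((1 : Matrix n n R).updateCol a (fun i => adjugate A i a)).updateCol b
          (fun i => adjugate A i b)).det := by rw [det_one_updateCol_updateCol hab]
    _ = ((A.updateCol a (Pi.single a A.det)).updateCol b (Pi.single b A.det)).det := by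
      rw [← det_mul, mul_updateCol, mul_updateCol, mul_one, mulVec_adjugate_col,
        mulVec_adjugate_col]
    _ = A.det ^ 2 * ((A.updateCol a (Pi.single a 1)).updateCol b (Pi.single b 1)).det := by
      rw [hsingle, hsingle, det_updateCol_smul, updateCol_updateCol_comm _ hab,
        det_updateCol_smul, updateCol_updateCol_comm _ hab.symm, sq, mul_assoc]

theorem adjugate_mul_adjugate_sub_adjugate_mul_adjugate (A : Matrix n n R) {a b : n}
    (hab : a ≠ b) :
    adjugate A a a * adjugate A b b - adjugate A b a * adjugate A a b =
      A.det * ((A.updateCol a (Pi.single a 1)).updateCol b (Pi.single b 1)).det := by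
  let X := mvPolynomialX n n ℤ
  have hX : adjugate X a a * adjugate X b b - adjugate X b a * adjugate X a b =
      X.det * ((X.updateCol a (Pi.single a 1)).updateCol b (Pi.single b 1)).det :=
    mul_left_cancel₀ (det_mvPolynomialX_ne_zero n ℤ) (by rw [det_mul_adjugate_minor X hab]; ring)
  let f := MvPolynomial.aeval (R := ℤ) fun p : n × n => A p.1 p.2
  have hA : X.map f = A := mvPolynomialX_mapMatrix_aeval ℤ A
  have hadj : ∀ i j, f (adjugate X i j) = adjugate A i j := fun i j => by
    rw [← hA, ← AlgHom.mapMatrix_apply, ← AlgHom.map_adjugate]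
    rfl
  have hsingle : ∀ j, f ∘ (Pi.single j 1 : n → MvPolynomial (n × n) ℤ) = Pi.single j 1 :=
    fun j => by ext i; by_cases h : i = j <;> simp [h]
  simpa only [map_sub, map_mul, hadj, AlgHom.map_det, AlgHom.mapMatrix_apply, map_updateCol,
    hsingle, hA] using congrArg f hX

theorem det_updateCol_single_one {k : ℕ} (A : Matrix (Fin (k + 1)) (Fin (k + 1)) R)
    (j : Fin (k + 1)) :
    (A.updateCol j (Pi.single j 1)).det = (A.submatrix j.succAbove j.succAbove).det := by
  rw [← det_transpose, ← updateRow_transpose, ← adjugate_apply, adjugate_fin_succ_eq_det_submatrix,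
    Even.neg_one_pow ⟨j, rfl⟩, one_mul, ← transpose_submatrix, det_transpose]

theorem det_updateCol_zero_updateCol_last {m : ℕ} (A : Matrix (Fin (m + 2)) (Fin (m + 2)) R) :
    ((A.updateCol 0 (Pi.single 0 1)).updateCol (Fin.last _) (Pi.single (Fin.last _) 1)).det =
      (A.submatrix (fun i : Fin m => i.succ.castSucc) (fun j => j.succ.castSucc)).det := by
  have hcomm : (A.updateCol 0 (Pi.single 0 1)).submatrix Fin.castSucc Fin.castSucc =
      (A.submatrix Fin.castSucc Fin.castSucc).updateCol 0 (Pi.single 0 1) := by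
    ext i j
    by_cases hj : j = 0 <;> simp [hj, Pi.single_apply]
  rw [det_updateCol_single_one, Fin.succAbove_last, hcomm, det_updateCol_single_one,
    Fin.succAbove_zero, submatrix_submatrix]
  rfl

theorem det_mul_det_submatrix_interior {m : ℕ} (A : Matrix (Fin (m + 2)) (Fin (m + 2)) R) :
    A.det * (A.submatrix (fun i : Fin m => i.succ.castSucc) (fun j => j.succ.castSucc)).det =
      (A.submatrix Fin.succ Fin.succ).det * (A.submatrix Fin.castSucc Fin.castSucc).det -
        (A.submatrix Fin.succ Fin.castSucc).det * (A.submatrix Fin.castSucc Fin.succ).det := by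
  have hsign : (-1 : R) ^ (m + 1) * (-1) ^ (m + 1) = 1 := by
    rw [← pow_add]; exact Even.neg_one_pow ⟨_, rfl⟩
  rw [← det_updateCol_zero_updateCol_last,
    ← adjugate_mul_adjugate_sub_adjugate_mul_adjugate A (Fin.last_pos.ne : (0 : Fin (m + 2)) ≠ _)]
  simp only [adjugate_fin_succ_eq_det_submatrix, Fin.succAbove_zero, Fin.succAbove_last,
    Fin.val_zero, Fin.val_last, pow_zero, one_mul, add_zero, zero_add,
    (Even.neg_one_pow ⟨m + 1, rfl⟩ : (-1 : R) ^ (m + 1 + (m + 1)) = 1)]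
  linear_combination
    -(A.submatrix Fin.succ Fin.castSucc).det * (A.submatrix Fin.castSucc Fin.succ).det * hsign

end Matrix

/-- Desnanot–Jacobi (Dodgson condensation) identity: for `n ≥ 2` and an `n × n`
matrix `A` over a commutative ring,
`det A * det A_int = det A^{1,1} * det A^{n,n} - det A^{1,n} * det A^{n,1}`,
where `A_int` deletes the first and last rows and columns (its determinant is `1`
when `n = 2`, being the empty matrix), and `A^{r,c}` deletes row `r` and column `c`. -/
theorem stmt2 {R : Type*} [CommRing R] {n : ℕ} (hn : 2 ≤ n)
    (A : Matrix (Fin n) (Fin n) R) :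
    A.det *
        (A.submatrix (fun i : Fin (n - 2) => (⟨(i : ℕ) + 1, by have := i.isLt; omega⟩ : Fin n))
          (fun j : Fin (n - 2) => (⟨(j : ℕ) + 1, by have := j.isLt; omega⟩ : Fin n))).det =
      (A.submatrix (fun i : Fin (n - 1) => (⟨(i : ℕ) + 1, by have := i.isLt; omega⟩ : Fin n))
            (fun j : Fin (n - 1) => (⟨(j : ℕ) + 1, by have := j.isLt; omega⟩ : Fin n))).det *
          (A.submatrix (fun i : Fin (n - 1) => (⟨(i : ℕ), by have := i.isLt; omega⟩ : Fin n))
            (fun j : Fin (n - 1) => (⟨(j : ℕ), by have := j.isLt; omega⟩ : Fin n))).det -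
        (A.submatrix (fun i : Fin (n - 1) => (⟨(i : ℕ) + 1, by have := i.isLt; omega⟩ : Fin n))
            (fun j : Fin (n - 1) => (⟨(j : ℕ), by have := j.isLt; omega⟩ : Fin n))).det *
          (A.submatrix (fun i : Fin (n - 1) => (⟨(i : ℕ), by have := i.isLt; omega⟩ : Fin n))
            (fun j : Fin (n - 1) => (⟨(j : ℕ) + 1, by have := j.isLt; omega⟩ : Fin n))).det := by
  obtain ⟨m, rfl⟩ : ∃ m, n = m + 2 := ⟨n - 2, by omega⟩
  exact Matrix.det_mul_det_submatrix_interior A
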